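/- arXiv:1701.03902 — 4 statements merged into one kernel-verified Lean document; each statement's English description precedes it below -/
import Mathlib

section
/- Let A be a Hilbert algebra, J a filter of A, and a ∈ A. Set J_a = {x ∈ A : x → a ∈ J} and a/J = {x ∈ A : x → a ∈ J and a → x ∈ J}. Then: (i) J_a is an ideal of A, i.e., if x ∈ J_a and y ≤ x then y ∈ J_a, and if x, y ∈ J_a and the least upper bound x ∨ y of x and y exists in A, then x ∨ y ∈ J_a; (ii) a/J is cofinal in J_a, i.e., for every x ∈ J_a there is x' ∈ a/J with x ≤ x'; (iii) for every m ∈ A, m is the greatest element of a/J if and only if m is the greatest element of J_a. -/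
/-- A Hilbert algebra: a set with implication `imp` and constant `one`. -/
class HilbertAlgebra (A : Type*) where
  imp : A → A → A
  one : A
  imp_one : ∀ x y : A, imp x (imp y x) = one
  imp_distrib : ∀ x y z : A,
    imp (imp x (imp y z)) (imp (imp x y) (imp x z)) = one
  imp_antisymm : ∀ x y : A, imp x y = one → imp y x = one → x = y

namespace HilbertAlgebra

variable {A : Type*} [HilbertAlgebra A]

/-- The natural order of a Hilbert algebra: `x ≤ y` iff `x → y = 1`. -/
def le (x y : A) : Prop := imp x y = one

/-- A filter of a Hilbert algebra. -/
def IsFilter (J : Set A) : Prop :=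
  (one : A) ∈ J ∧ ∀ x y : A, x ∈ J → imp x y ∈ J → y ∈ J

private lemma t1 (x : A) : imp (one : A) (imp one (imp x x)) = one := by
  have h := imp_distrib x (imp x x) x
  rw [imp_one x (imp x x), imp_one x x] at h
  exact h

private lemma t4 (x : A) : imp (one : A) (imp x x) = one := by
  have h := imp_one (imp (one : A) (imp x x)) (one : A)
  rw [t1 x] at h
  exact imp_antisymm _ _ h (t1 x)

lemma imp_self' (x : A) : imp x x = one := by
  have h := imp_one (imp x x) (one : A)
  rw [t4 x] at h
  exact imp_antisymm _ _ h (t4 x)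

lemma imp_top (x : A) : imp x one = (one : A) := by
  have h := imp_one x x
  rw [imp_self'] at h
  exact h

private lemma mp11 (w : A) (h : imp (one : A) (imp one w) = one) : w = one := by
  have h1 : imp (one : A) w = one := imp_antisymm _ _ (imp_top _) h
  exact imp_antisymm _ _ (imp_top _) h1

lemma one_imp (x : A) : imp one x = x := by
  have h := imp_distrib (imp (one : A) x) one x
  rw [imp_self', imp_top] at h
  have h2 : imp (imp (one : A) x) x = one := mp11 _ h
  exact imp_antisymm _ _ h2 (imp_one x one)

lemma le_mp {x y z : A} (h1 : imp x y = one) (h2 : imp x (imp y z) = one) :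
    imp x z = one := by
  have h := imp_distrib x y z
  rw [h2, one_imp, h1, one_imp] at h
  exact h

lemma le_trans' {x y z : A} (h1 : imp x y = one) (h2 : imp y z = one) :
    imp x z = one := by
  refine le_mp h1 ?_
  rw [h2]; exact imp_top x

lemma antitone_left {a b : A} (hab : imp a b = one) (c : A) :
    imp (imp b c) (imp a c) = one := by
  have s2 : imp (imp a (imp b c)) (imp a c) = one := by
    have h := imp_distrib a b c
    rw [hab, one_imp] at h
    exact h
  exact le_trans' (imp_one (imp b c) a) s2

lemma exchange (x y z : A) : imp x (imp y z) = imp y (imp x z) := by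
  have dir : ∀ u v w : A, imp (imp u (imp v w)) (imp v (imp u w)) = one := by
    intro u v w
    have s1 := imp_distrib u v w
    have s2 : imp (imp (imp u v) (imp u w)) (imp v (imp u w)) = one :=
      antitone_left (imp_one v u) (imp u w)
    exact le_trans' s1 s2
  exact imp_antisymm _ _ (dir x y z) (dir y x z)

lemma le_imp_imp (x y : A) : imp x (imp (imp x y) y) = one := by
  rw [exchange x (imp x y) y]
  exact imp_self' _

lemma filter_up {J : Set A} (hJ : IsFilter J) {u v : A} (hu : u ∈ J)
    (h : imp u v = one) : v ∈ J :=
  hJ.2 u v hu (h ▸ hJ.1)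

/-- For a filter `J` and `a ∈ A`, the set `J_a = {x : x → a ∈ J}` is an ideal (downward
closed and closed under existing joins), the class `a/J` is cofinal in `J_a`, and
`a/J` and `J_a` have the same greatest elements. -/
theorem ideal_cofinal_max (J : Set A) (hJ : IsFilter J) (a : A) :
    -- (i) J_a is downward closed
    (∀ x ∈ {x : A | imp x a ∈ J}, ∀ y : A, le y x → y ∈ {x : A | imp x a ∈ J}) ∧
    -- (i) J_a is closed under existing least upper bounds
    (∀ x ∈ {x : A | imp x a ∈ J}, ∀ y ∈ {x : A | imp x a ∈ J}, ∀ s : A,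
        (le x s ∧ le y s ∧ ∀ t : A, le x t → le y t → le s t) →
        s ∈ {x : A | imp x a ∈ J}) ∧
    -- (ii) a/J is cofinal in J_a
    (∀ x ∈ {x : A | imp x a ∈ J},
        ∃ x' ∈ {x : A | imp x a ∈ J ∧ imp a x ∈ J}, le x x') ∧
    -- (iii) greatest elements coincide
    (∀ m : A,
        (m ∈ {x : A | imp x a ∈ J ∧ imp a x ∈ J} ∧
          ∀ x ∈ {x : A | imp x a ∈ J ∧ imp a x ∈ J}, le x m) ↔
        (m ∈ {x : A | imp x a ∈ J} ∧ ∀ x ∈ {x : A | imp x a ∈ J}, le x m)) := by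
  -- downward closure
  have down : ∀ x ∈ {x : A | imp x a ∈ J}, ∀ y : A, le y x →
      y ∈ {x : A | imp x a ∈ J} := by
    intro x hx y hyx
    exact filter_up hJ hx (antitone_left hyx a)
  -- cofinality
  have cof : ∀ x ∈ {x : A | imp x a ∈ J},
      ∃ x' ∈ {x : A | imp x a ∈ J ∧ imp a x ∈ J}, le x x' := by
    intro x hx
    refine ⟨imp (imp x a) a, ⟨?_, ?_⟩, le_imp_imp x a⟩
    · exact filter_up hJ hx (le_imp_imp (imp x a) a)
    · have : imp a (imp (imp x a) a) = one := by
        rw [exchange, imp_self', imp_top]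
      exact this ▸ hJ.1
  refine ⟨down, ?_, cof, ?_⟩
  · -- joins
    intro x hx y hy s ⟨hxs, hys, hlub⟩
    set b := imp (imp x a) (imp (imp y a) a) with hb
    have hxb : le x b := by
      show imp x b = one
      rw [hb, exchange x (imp x a), exchange x (imp y a)]
      exact imp_one (imp x a) (imp y a)
    have hyb : le y b := by
      show imp y b = one
      rw [hb, exchange y (imp x a), exchange y (imp y a), imp_self', imp_top]
    have hsb : imp s b = one := hlub b hxb hyb
    rw [hb, exchange s (imp x a), exchange s (imp y a)] at hsb
    have h1 : imp (imp y a) (imp s a) ∈ J := hJ.2 _ _ hx (hsb ▸ hJ.1)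
    exact hJ.2 _ _ hy h1
  · -- greatest elements
    intro m
    constructor
    · rintro ⟨hm, hmax⟩
      refine ⟨hm.1, ?_⟩
      intro x hx
      obtain ⟨x', hx', hxx'⟩ := cof x hx
      exact le_trans' hxx' (hmax x' hx')
    · rintro ⟨hm, hmax⟩
      obtain ⟨m', hm', hmm'⟩ := cof m hm
      have hm'm : le m' m := hmax m' hm'.1
      have : m = m' := imp_antisymm _ _ hmm' hm'm
      subst this
      exact ⟨hm', fun x hx => hmax x hx.1⟩

end HilbertAlgebra
end

section
/- Let A be a Hilbert algebra and φ a closure endomorphism of A. If a, b ∈ A are compatible, then φ(a) and φ(b) are compatible and φ(a ∧ b) = φ(a) ∧ φ(b), where a ∧ b denotes the (compatible) meet of a and b. -/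
namespace HilbertAlgebra

variable {A : Type*} [HilbertAlgebra A]

/-- A closure endomorphism: an endomorphism that is also a closure operator. -/
def IsClosureEndo (φ : A → A) : Prop :=
  (∀ x y : A, φ (imp x y) = imp (φ x) (φ y)) ∧
  (∀ x : A, le x (φ x)) ∧
  (∀ x : A, φ (φ x) = φ x) ∧
  (∀ x y : A, le x y → le (φ x) (φ y))

private lemma mp' {b : A} (h : imp one b = one) : b = one := by
  have h1 : imp b (imp one b) = one := imp_one b one
  rw [h] at h1
  exact imp_antisymm b one h1 h

private lemma le_one (x : A) : le x one := by
  have := imp_one (x := one) (y := x)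
  exact mp' this

private lemma le_trans'_s1 {x y z : A} (hxy : le x y) (hyz : le y z) : le x z := by
  have h2 := imp_distrib x y z
  unfold le at *
  rw [hyz, le_one x] at h2
  have h3 := mp' h2
  rw [hxy] at h3
  exact mp' h3

private lemma le_mp_s1 {t u v : A} (h1 : le t (imp u v)) (h2 : le t u) : le t v := by
  have h := imp_distrib t u v
  unfold le at *
  rw [h1] at h
  have h3 := mp' h
  rw [h2] at h3
  exact mp' h3

/-- If `a` and `b` are compatible with (necessarily greatest) lower bound `c`
(i.e. `c ≤ a`, `c ≤ b`, `a ≤ b → c`), then `φ a` and `φ b` are compatible with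
compatible meet `φ c`; in particular `φ (a ∧ b) = φ a ∧ φ b`. -/
theorem closureEndo_preserves_compatible_meet (φ : A → A) (hφ : IsClosureEndo φ)
    (a b c : A) (hca : le c a) (hcb : le c b) (hcomp : le a (imp b c)) :
    le (φ c) (φ a) ∧ le (φ c) (φ b) ∧ le (φ a) (imp (φ b) (φ c)) ∧
      ∀ t : A, le t (φ a) → le t (φ b) → le t (φ c) := by
  obtain ⟨he, hle, hid, hm⟩ := hφ
  have h3 : le (φ a) (imp (φ b) (φ c)) := by
    have := hm a (imp b c) hcomp
    rwa [he b c] at this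
  exact ⟨hm c a hca, hm c b hcb, h3,
    fun t hta htb => le_mp_s1 (le_trans'_s1 hta h3) htb⟩

end HilbertAlgebra
end

section
/- Let A be an implication algebra, p ∈ A, and φ a closure endomorphism of A such that φ(x) ≤ p → x for all x ∈ A. Then φ(x) = (φ(p) → p) → x for all x ∈ A; that is, φ is the principal closure endomorphism α_q with q = φ(p) → p. -/
namespace HilbertAlgebra

variable {A : Type*} [HilbertAlgebra A]

section Aux

variable (himp : ∀ x y : A, imp (imp x y) x = x)
include himp

private lemma aux_impshape_top (y x : A) : imp (imp y x) one = one := by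
  have h1 := imp_one (imp y x) x
  rwa [imp_one x y] at h1

private lemma aux_top (c : A) : imp c one = one := by
  conv_lhs => rw [← himp c c]
  exact aux_impshape_top himp (imp c c) c

private lemma aux_mp {a b : A} (hab : imp a b = one) (ha : a = one) : b = one := by
  rw [ha] at hab
  exact imp_antisymm b one (aux_top himp b) hab

private lemma aux_weaken {b : A} (hb : b = one) (a : A) : imp a b = one :=
  aux_mp himp (imp_one b a) hb

private lemma aux_s {a b c : A} (h1 : imp a (imp b c) = one)
    (h2 : imp a b = one) : imp a c = one :=
  aux_mp himp (aux_mp himp (imp_distrib a b c) h1) h2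

private lemma aux_refl (a : A) : imp a a = one :=
  aux_s himp (imp_one a (imp one a)) (imp_one a one)

private lemma aux_one_imp (a : A) : imp one a = a := by
  apply imp_antisymm
  · exact aux_s himp (aux_refl himp (imp one a)) (aux_top himp (imp one a))
  · exact imp_one a one

private lemma aux_comp {a b c : A} (h1 : imp a b = one) (h2 : imp b c = one) :
    imp a c = one :=
  aux_s himp (aux_weaken himp h2 a) h1

private lemma aux_mono {u v : A} (h : imp u v = one) (w : A) :
    imp (imp w u) (imp w v) = one :=
  aux_mp himp (imp_distrib w u v) (aux_weaken himp h w)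

private lemma aux_s2 {a q b c : A} (h1 : imp a (imp q (imp b c)) = one)
    (h2 : imp a (imp q b) = one) : imp a (imp q c) = one :=
  aux_s himp (aux_comp himp h1 (imp_distrib q b c)) h2

private lemma aux_s3 {a q r b c : A}
    (h1 : imp a (imp q (imp r (imp b c))) = one)
    (h2 : imp a (imp q (imp r b)) = one) :
    imp a (imp q (imp r c)) = one :=
  aux_s2 himp (aux_comp himp h1 (aux_mono himp (imp_distrib r b c) q)) h2

end Aux

/-- In an implication algebra, a closure endomorphism below a principal closure
endomorphism `α_p : x ↦ p → x` is itself principal: `φ = α_q` for `q = φ p → p`. -/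
theorem closureEndo_principal_of_le_principal
    (himp : ∀ x y : A, imp (imp x y) x = x)
    (p : A) (φ : A → A) (hφ : IsClosureEndo φ)
    (hle : ∀ x : A, le (φ x) (imp p x)) :
    ∀ x : A, φ x = imp (imp (φ p) p) x := by
  obtain ⟨hom, hcl, hid, _⟩ := hφ
  intro x
  -- notation: A := φ x, Q := φ p → p, R := x → p, F := φ p, P := p, X := x
  have hφq : φ (imp (imp (φ p) p) x) = φ x := by
    rw [hom, hom, hid, aux_refl himp (φ p), aux_one_imp himp (φ x)]
  -- direction 1 : (Q → x) ≤ φ x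
  have h1 : imp (imp (imp (φ p) p) x) (φ x) = one := by
    have h := hcl (imp (imp (φ p) p) x)
    unfold le at h
    rwa [hφq] at h
  -- T1 : φ x ≤ p → x
  have T1 : imp (φ x) (imp p x) = one := hle x
  -- T2 : (x → p) ≤ φ x → φ p
  have T2 : imp (imp x p) (imp (φ x) (φ p)) = one := by
    have h := hcl (imp x p)
    unfold le at h
    rwa [hom] at h
  -- context derivation under [A, Q, R]
  have projA3 : imp (φ x) (imp (imp (φ p) p) (imp (imp x p) (φ x))) = one :=
    aux_comp himp (imp_one (φ x) (imp x p))
      (imp_one (imp (imp x p) (φ x)) (imp (φ p) p))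
  have projQ3 : imp (φ x) (imp (imp (φ p) p) (imp (imp x p) (imp (φ p) p))) = one :=
    aux_weaken himp (imp_one (imp (φ p) p) (imp x p)) (φ x)
  -- lift T2 into context: A → (Q → (R → (A → F)))
  have ctxT2 : imp (φ x) (imp (imp (φ p) p) (imp (imp x p) (imp (φ x) (φ p)))) = one :=
    aux_weaken himp (aux_weaken himp T2 (imp (φ p) p)) (φ x)
  -- ctx ⊢ F
  have hF : imp (φ x) (imp (imp (φ p) p) (imp (imp x p) (φ p))) = one :=
    aux_s3 himp ctxT2 projA3
  -- ctx ⊢ P  (using Q = F → P)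
  have hP : imp (φ x) (imp (imp (φ p) p) (imp (imp x p) p)) = one :=
    aux_s3 himp projQ3 hF
  -- lift T1 into context: ctx ⊢ (P → X)
  have ctxT1 : imp (φ x) (imp (imp (φ p) p) (imp (imp x p) (imp p x))) = one :=
    aux_comp himp (aux_comp himp T1 (imp_one (imp p x) (imp x p)))
      (imp_one (imp (imp x p) (imp p x)) (imp (φ p) p))
  -- ctx ⊢ X
  have hX : imp (φ x) (imp (imp (φ p) p) (imp (imp x p) x)) = one :=
    aux_s3 himp ctxT1 hP
  rw [himp x p] at hX
  exact imp_antisymm (φ x) (imp (imp (φ p) p) x) hX h1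

end HilbertAlgebra
end

section
/- Let A and B be Hilbert algebras. The lattice of all filters of A (ordered by inclusion) is order-isomorphic to the lattice of all filters of B if and only if the poset of finitely generated filters of A (ordered by inclusion) is order-isomorphic to the poset of finitely generated filters of B. -/
namespace HilbertAlgebra

variable {A : Type*} [HilbertAlgebra A]

/-- A finitely generated filter: the least filter containing some finite subset. -/
def IsFGFilter (J : Set A) : Prop :=
  IsFilter J ∧ ∃ P : Finset A, ↑P ⊆ J ∧
    ∀ J' : Set A, IsFilter J' → ↑P ⊆ J' → J ⊆ J'

/-! ### Generated filters -/

/-- The filter generated by a set. -/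
def gen (X : Set A) : Set A := ⋂₀ {J | IsFilter J ∧ X ⊆ J}

lemma mem_gen {X : Set A} {x : A} :
    x ∈ gen X ↔ ∀ J : Set A, IsFilter J → X ⊆ J → x ∈ J := by
  simp [gen, Set.mem_sInter, and_imp]

lemma isFilter_gen (X : Set A) : IsFilter (gen X) := by
  constructor
  · exact mem_gen.2 fun J hJ _ => hJ.1
  · intro x y hx hxy
    refine mem_gen.2 fun J hJ hXJ => ?_
    exact hJ.2 x y (mem_gen.1 hx J hJ hXJ) (mem_gen.1 hxy J hJ hXJ)

lemma subset_gen (X : Set A) : X ⊆ gen X :=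
  fun _ hx => mem_gen.2 fun _ _ hXJ => hXJ hx

lemma gen_least {X J : Set A} (hJ : IsFilter J) (hXJ : X ⊆ J) : gen X ⊆ J :=
  fun _ hx => mem_gen.1 hx J hJ hXJ

lemma gen_mono {X Y : Set A} (h : X ⊆ Y) : gen X ⊆ gen Y :=
  gen_least (isFilter_gen Y) (h.trans (subset_gen Y))

lemma isFGFilter_gen (P : Finset A) : IsFGFilter (gen (↑P : Set A)) :=
  ⟨isFilter_gen _, P, subset_gen _, fun _ hJ' hPJ' => gen_least hJ' hPJ'⟩

lemma isFGFilter_iff {J : Set A} :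
    IsFGFilter J ↔ ∃ P : Finset A, J = gen (↑P : Set A) := by
  constructor
  · rintro ⟨hJ, P, hPJ, hleast⟩
    exact ⟨P, subset_antisymm (hleast _ (isFilter_gen _) (subset_gen _))
      (gen_least hJ hPJ)⟩
  · rintro ⟨P, rfl⟩
    exact isFGFilter_gen P

lemma isFGFilter_singleton (x : A) : IsFGFilter (gen {x}) := by
  have := isFGFilter_gen ({x} : Finset A)
  simpa using this

lemma isFGFilter_empty : IsFGFilter (gen (∅ : Set A)) := by
  have := isFGFilter_gen (∅ : Finset A)
  simpa using this

/-- The join of two f.g. filters is f.g. -/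
lemma isFGFilter_join {c d : Set A} (hc : IsFGFilter c) (hd : IsFGFilter d) :
    IsFGFilter (gen (c ∪ d)) := by
  classical
  obtain ⟨P, rfl⟩ := isFGFilter_iff.1 hc
  obtain ⟨Q, rfl⟩ := isFGFilter_iff.1 hd
  refine isFGFilter_iff.2 ⟨P ∪ Q, subset_antisymm ?_ ?_⟩
  · refine gen_least (isFilter_gen _) (Set.union_subset ?_ ?_) <;>
      refine gen_least (isFilter_gen _) (Set.Subset.trans ?_
        (subset_gen ((↑(P ∪ Q) : Set A))))
    · intro x hx
      exact Finset.mem_coe.2 (Finset.mem_union_left _ (Finset.mem_coe.1 hx))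
    · intro x hx
      exact Finset.mem_coe.2 (Finset.mem_union_right _ (Finset.mem_coe.1 hx))
  · refine gen_least (isFilter_gen _) ?_
    intro x hx
    simp only [Finset.coe_union, Set.mem_union] at hx
    rcases hx with h | h
    · exact subset_gen _ (Or.inl (subset_gen _ h))
    · exact subset_gen _ (Or.inr (subset_gen _ h))

/-- Key decomposition: the filter generated by a union of a family of sets is the
union of the filters generated by finite subfamilies. -/
lemma gen_sUnion_eq (S : Set (Set A)) :
    gen (⋃₀ S) = ⋃₀ {K | ∃ T ⊆ S, T.Finite ∧ K = gen (⋃₀ T)} := by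
  apply subset_antisymm
  · refine gen_least ?_ ?_
    · constructor
      · exact ⟨gen (⋃₀ (∅ : Set (Set A))), ⟨∅, by simp, Set.finite_empty, rfl⟩,
          (isFilter_gen _).1⟩
      · rintro x y ⟨K₁, ⟨T₁, hT₁S, hT₁f, rfl⟩, hx⟩ ⟨K₂, ⟨T₂, hT₂S, hT₂f, rfl⟩, hxy⟩
        refine ⟨gen (⋃₀ (T₁ ∪ T₂)), ⟨T₁ ∪ T₂, Set.union_subset hT₁S hT₂S,
          hT₁f.union hT₂f, rfl⟩, ?_⟩
        refine (isFilter_gen _).2 x y ?_ ?_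
        · exact gen_mono (Set.sUnion_mono Set.subset_union_left) hx
        · exact gen_mono (Set.sUnion_mono Set.subset_union_right) hxy
    · rintro x ⟨c, hcS, hxc⟩
      exact ⟨gen (⋃₀ {c}), ⟨{c}, by simpa using hcS, Set.finite_singleton c, rfl⟩,
        subset_gen _ (by simpa using hxc)⟩
  · rintro x ⟨K, ⟨T, hTS, _, rfl⟩, hx⟩
    exact gen_mono (Set.sUnion_mono hTS) hx

/-! ### Compact elements -/

/-- Compactness in a poset, formulated purely order-theoretically. -/
def IsCpt {α : Type*} [Preorder α] (c : α) : Prop :=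
  ∀ S : Set α, ∀ u : α, IsLUB S u → c ≤ u →
    ∃ T ⊆ S, T.Finite ∧ ∀ b ∈ upperBounds T, c ≤ b

lemma IsCpt.map {α β : Type*} [Preorder α] [Preorder β] (e : α ≃o β) {c : α}
    (h : IsCpt c) : IsCpt (e c) := by
  intro S u hu hcu
  have hlub : IsLUB (e.symm '' S) (e.symm u) := by
    constructor
    · rintro a ⟨s, hs, rfl⟩
      exact e.symm.monotone (hu.1 hs)
    · intro b hb
      have : u ≤ e b := by
        refine hu.2 ?_
        intro s hs
        have : e.symm s ≤ b := hb ⟨s, hs, rfl⟩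
        calc s = e (e.symm s) := (e.apply_symm_apply s).symm
          _ ≤ e b := e.monotone this
      calc e.symm u ≤ e.symm (e b) := e.symm.monotone this
        _ = b := e.symm_apply_apply b
  obtain ⟨T, hTS, hTf, hT⟩ := h (e.symm '' S) (e.symm u) hlub
    (by simpa using e.symm.monotone hcu)
  refine ⟨e '' T, ?_, hTf.image _, ?_⟩
  · rintro b ⟨a, ha, rfl⟩
    obtain ⟨s, hs, rfl⟩ := hTS ha
    simpa using hs
  · intro b hb
    have : e.symm b ∈ upperBounds T := by
      intro a ha
      have : e a ≤ b := hb ⟨a, ha, rfl⟩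
      simpa using e.symm.monotone this
    have := hT _ this
    calc e c ≤ e (e.symm b) := e.monotone this
      _ = b := e.apply_symm_apply b

/-- f.g. filters are exactly the compact elements of the filter poset. -/
lemma isCpt_iff_isFGFilter (J : {J : Set A // IsFilter J}) :
    IsCpt J ↔ IsFGFilter J.1 := by
  constructor
  · intro h
    -- J is the lub of the principal filters of its elements
    set S : Set {J : Set A // IsFilter J} :=
      {c | ∃ x ∈ J.1, c = ⟨gen {x}, isFilter_gen _⟩} with hS
    have hlub : IsLUB S J := by
      constructor
      · rintro c ⟨x, hx, rfl⟩
        exact gen_least J.2 (by simpa using hx)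
      · intro b hb x hx
        have : (⟨gen {x}, isFilter_gen _⟩ : {J : Set A // IsFilter J}) ≤ b :=
          hb ⟨x, hx, rfl⟩
        exact this (subset_gen _ rfl)
    obtain ⟨T, hTS, hTf, hT⟩ := h S J hlub le_rfl
    -- choose generators
    have hch : ∀ c : T, ∃ x, x ∈ J.1 ∧ (c : {J : Set A // IsFilter J}).1 = gen {x} := by
      rintro ⟨c, hc⟩
      obtain ⟨x, hx, rfl⟩ := hTS hc
      exact ⟨x, hx, rfl⟩
    choose f hf1 hf2 using hch
    have : Finite T := hTf
    have hXf : (Set.range f).Finite := Set.finite_range f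
    refine ⟨J.2, hXf.toFinset, ?_, ?_⟩
    · intro x hx
      simp only [Set.Finite.coe_toFinset] at hx
      obtain ⟨c, rfl⟩ := hx
      exact hf1 c
    · intro J' hJ' hPJ'
      simp only [Set.Finite.coe_toFinset] at hPJ'
      refine hT ⟨J', hJ'⟩ ?_
      rintro c hc
      show c.1 ⊆ J'
      rw [hf2 ⟨c, hc⟩]
      refine gen_least hJ' ?_
      simpa using hPJ' ⟨⟨c, hc⟩, rfl⟩
  · rintro ⟨hJ, P, hPJ, hleast⟩
    intro S u hu hJu
    -- u must be the filter generated by the union of S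
    set U : Set A := ⋃₀ (Subtype.val '' S) with hU
    have hub : (⟨gen U, isFilter_gen U⟩ : {J : Set A // IsFilter J}) ∈ upperBounds S := by
      rintro c hc
      show c.1 ⊆ gen U
      exact (Set.subset_sUnion_of_mem
        (Set.mem_image_of_mem Subtype.val hc)).trans (subset_gen U)
    have hugen : u.1 ⊆ gen U := hu.2 hub
    have hJu' : J.1 ⊆ u.1 := hJu
    have hPgen : (↑P : Set A) ⊆ gen U := hPJ.trans (hJu'.trans hugen)
    rw [hU, gen_sUnion_eq] at hPgen
    -- for each generator, a finite subfamily suffices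
    have hch : ∀ p : P, ∃ T ⊆ Subtype.val '' S, T.Finite ∧ (p : A) ∈ gen (⋃₀ T) := by
      rintro ⟨p, hp⟩
      obtain ⟨K, ⟨T, hTS, hTf, rfl⟩, hpK⟩ := hPgen hp
      exact ⟨T, hTS, hTf, hpK⟩
    choose g hg1 hg2 hg3 using hch
    set 𝒯 : Set (Set A) := ⋃ p : P, g p with h𝒯
    have h𝒯f : 𝒯.Finite := Set.finite_iUnion hg2
    have h𝒯S : 𝒯 ⊆ Subtype.val '' S := Set.iUnion_subset hg1
    set T : Set {J : Set A // IsFilter J} := {c | c ∈ S ∧ c.1 ∈ 𝒯} with hT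
    refine ⟨T, fun c hc => hc.1, ?_, ?_⟩
    · have : T ⊆ Subtype.val ⁻¹' 𝒯 := fun c hc => hc.2
      exact Set.Finite.subset (h𝒯f.preimage (Subtype.val_injective.injOn)) this
    · intro b hb
      have hsub : ⋃₀ 𝒯 ⊆ b.1 := by
        rintro x ⟨K, hK, hxK⟩
        obtain ⟨c, hcS, rfl⟩ := h𝒯S hK
        exact hb ⟨hcS, hK⟩ hxK
      have hPb : (↑P : Set A) ⊆ b.1 := by
        rintro p hp
        have : (p : A) ∈ gen (⋃₀ g ⟨p, hp⟩) := hg3 ⟨p, hp⟩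
        have hsub2 : ⋃₀ g ⟨p, hp⟩ ⊆ ⋃₀ 𝒯 :=
          Set.sUnion_mono (Set.subset_iUnion g ⟨p, hp⟩)
        exact gen_least b.2 (hsub2.trans hsub) this
      exact hleast b.1 b.2 hPb

/-! ### Ideals of a poset -/

/-- An ideal of a poset: a nonempty directed lower set. -/
def IsIdl {α : Type*} [Preorder α] (D : Set α) : Prop :=
  D.Nonempty ∧ (∀ ⦃a b⦄, a ≤ b → b ∈ D → a ∈ D) ∧
    ∀ ⦃a⦄, a ∈ D → ∀ ⦃b⦄, b ∈ D → ∃ c ∈ D, a ≤ c ∧ b ≤ c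

/-- An order isomorphism induces an isomorphism of ideal posets. -/
def idlIso {α β : Type*} [Preorder α] [Preorder β] (e : α ≃o β) :
    {D : Set α // IsIdl D} ≃o {D : Set β // IsIdl D} where
  toFun D := ⟨e '' D.1, D.2.1.image e,
    by
      rintro a b hab ⟨c, hc, rfl⟩
      exact ⟨e.symm a, D.2.2.1 (by simpa using (e.symm.monotone hab)) hc, by simp⟩,
    by
      rintro a ⟨a', ha', rfl⟩ b ⟨b', hb', rfl⟩
      obtain ⟨c, hc, h1, h2⟩ := D.2.2.2 ha' hb'
      exact ⟨e c, ⟨c, hc, rfl⟩, e.monotone h1, e.monotone h2⟩⟩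
  invFun D := ⟨e.symm '' D.1, D.2.1.image e.symm,
    by
      rintro a b hab ⟨c, hc, rfl⟩
      exact ⟨e a, D.2.2.1 (by simpa using (e.monotone hab)) hc, by simp⟩,
    by
      rintro a ⟨a', ha', rfl⟩ b ⟨b', hb', rfl⟩
      obtain ⟨c, hc, h1, h2⟩ := D.2.2.2 ha' hb'
      exact ⟨e.symm c, ⟨c, hc, rfl⟩, e.symm.monotone h1, e.symm.monotone h2⟩⟩
  left_inv D := by
    ext1
    simp [Set.image_image]
  right_inv D := by
    ext1
    simp [Set.image_image]
  map_rel_iff' := by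
    intro D D'
    constructor
    · intro h
      have := Set.image_mono (f := e.symm) h
      simpa [Set.image_image] using this
    · intro h
      exact Set.image_mono (f := e) h

/-! ### The filter lattice is the ideal completion of the f.g. filter poset -/

/-- In an ideal of f.g. filters, every finite subset of the union is inside
a single member. -/
lemma idl_finite_bound {D : Set {J : Set A // IsFGFilter J}} (hD : IsIdl D)
    {X : Set A} (hX : X.Finite) :
    X ⊆ (⋃ c ∈ D, (c : Set A)) →
      ∃ e ∈ D, X ⊆ (e : {J : Set A // IsFGFilter J}).1 := by
  refine Set.Finite.induction_on (motive := fun X _ => X ⊆ (⋃ c ∈ D, (c : Set A)) →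
        ∃ e ∈ D, X ⊆ (e : {J : Set A // IsFGFilter J}).1) X hX ?_ ?_
  · intro _
    obtain ⟨c, hc⟩ := hD.1
    exact ⟨c, hc, by simp⟩
  · intro x X hxX hXf ih hXU
    obtain ⟨e₁, he₁, hXe₁⟩ := ih ((Set.subset_insert x X).trans hXU)
    have hx : x ∈ ⋃ c ∈ D, (c : Set A) := hXU (Set.mem_insert x X)
    simp only [Set.mem_iUnion] at hx
    obtain ⟨c, hc, hxc⟩ := hx
    obtain ⟨f, hf, h1, h2⟩ := hD.2.2 he₁ hc
    exact ⟨f, hf, Set.insert_subset (h2 hxc) (hXe₁.trans h1)⟩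

/-- The filter lattice is isomorphic to the poset of ideals of the
f.g. filter poset. -/
noncomputable def filToIdl :
    {J : Set A // IsFilter J} ≃o {D : Set {J : Set A // IsFGFilter J} // IsIdl D} where
  toFun J := ⟨{c | (c : Set A) ⊆ J.1},
    ⟨⟨gen ∅, isFGFilter_empty⟩, gen_least J.2 (Set.empty_subset _)⟩,
    fun a b hab hb => Set.Subset.trans hab hb,
    by
      rintro c hc d hd
      refine ⟨⟨gen (c.1 ∪ d.1), isFGFilter_join c.2 d.2⟩,
        gen_least J.2 (Set.union_subset hc hd), ?_, ?_⟩
      · exact (Set.subset_union_left).trans (subset_gen _)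
      · exact (Set.subset_union_right).trans (subset_gen _)⟩
  invFun D := ⟨⋃ c ∈ D.1, (c : Set A),
    by
      constructor
      · obtain ⟨c, hc⟩ := D.2.1
        exact Set.mem_biUnion hc c.2.1.1
      · intro x y hx hxy
        simp only [Set.mem_iUnion] at hx hxy ⊢
        obtain ⟨c, hc, hxc⟩ := hx
        obtain ⟨d, hd, hxyd⟩ := hxy
        obtain ⟨f, hf, h1, h2⟩ := D.2.2.2 hc hd
        exact ⟨f, hf, f.2.1.2 x y (h1 hxc) (h2 hxyd)⟩⟩
  left_inv J := by
    ext1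
    apply subset_antisymm
    · intro x hx
      simp only [Set.mem_iUnion] at hx
      obtain ⟨c, hc, hxc⟩ := hx
      exact hc hxc
    · intro x hx
      have hmem : (⟨gen {x}, isFGFilter_singleton x⟩ :
          {J : Set A // IsFGFilter J}) ∈
          {c : {J : Set A // IsFGFilter J} | (c : Set A) ⊆ J.1} :=
        gen_least J.2 (Set.singleton_subset_iff.2 hx)
      simp only [Set.mem_iUnion]
      exact ⟨_, hmem, subset_gen ({x} : Set A) rfl⟩
  right_inv D := by
    ext1
    apply subset_antisymm
    · intro c hc
      have hcD : (c : Set A) ⊆ ⋃ c ∈ D.1, (c : Set A) := hc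
      obtain ⟨hcf, P, hPc, hleast⟩ := c.2
      obtain ⟨e, he, hPe⟩ := idl_finite_bound D.2 (P.finite_toSet) (hPc.trans hcD)
      have : c ≤ e := hleast e.1 e.2.1 hPe
      exact D.2.2.1 this he
    · intro c hc
      exact Set.subset_biUnion_of_mem hc
  map_rel_iff' {J K} := by
    constructor
    · intro h x hx
      have hmem : (⟨gen {x}, isFGFilter_singleton x⟩ :
          {J : Set A // IsFGFilter J}) ∈
          {c : {J : Set A // IsFGFilter J} | (c : Set A) ⊆ J.1} :=
        gen_least J.2 (Set.singleton_subset_iff.2 hx)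
      exact h hmem (subset_gen ({x} : Set A) rfl)
    · intro h c hc
      exact Set.Subset.trans hc h

/-! ### Main theorem -/

/-- The filter lattices of two Hilbert algebras are order-isomorphic iff their
posets of finitely generated filters are order-isomorphic. -/
theorem filterLattice_iso_iff_fgFilters_iso
    {B : Type*} [HilbertAlgebra B] :
    Nonempty ({J : Set A // IsFilter J} ≃o {J : Set B // IsFilter J}) ↔
    Nonempty ({J : Set A // IsFGFilter J} ≃o {J : Set B // IsFGFilter J}) := by
  constructor
  · rintro ⟨e⟩
    refine ⟨{
      toFun := fun c => ⟨(e ⟨c.1, c.2.1⟩).1,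
        (isCpt_iff_isFGFilter _).1 (by
          have := ((isCpt_iff_isFGFilter ⟨c.1, c.2.1⟩).2 c.2).map e
          simpa using this)⟩
      invFun := fun c => ⟨(e.symm ⟨c.1, c.2.1⟩).1,
        (isCpt_iff_isFGFilter _).1 (by
          have := ((isCpt_iff_isFGFilter ⟨c.1, c.2.1⟩).2 c.2).map e.symm
          simpa using this)⟩
      left_inv := fun c => Subtype.ext (by
        show (e.symm ⟨(e ⟨c.1, c.2.1⟩).1, _⟩).1 = c.1
        rw [Subtype.eta, e.symm_apply_apply])
      right_inv := fun c => Subtype.ext (by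
        show (e ⟨(e.symm ⟨c.1, c.2.1⟩).1, _⟩).1 = c.1
        rw [Subtype.eta, e.apply_symm_apply])
      map_rel_iff' := by
        intro c d
        show e ⟨c.1, c.2.1⟩ ≤ e ⟨d.1, d.2.1⟩ ↔ c ≤ d
        rw [e.map_rel_iff]
        exact Iff.rfl }⟩
  · rintro ⟨g⟩
    exact ⟨(filToIdl (A := A)).trans ((idlIso g).trans (filToIdl (A := B)).symm)⟩

end HilbertAlgebra
end
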